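/- For every positive integer p, the number of nonempty ordered sequences of distinct elements from a set of size p equals ∑_{j=1}^{p} p!/(p-j)!, and this quantity equals ⌊p! · e⌋ − 1. -/

import Mathlib

/-!
Counting injections `Fin j ↪ Fin p` gives `p! / (p - j)!`, and reindexing by `k = p - j` turns
the sum into `∑_{k < p} p! / k!`. Adding the term `k = p` gives `p! · ∑_{k ≤ p} 1 / k!`, an integer
below `p! · e` whose distance to it is `p! · ∑_{k > p} 1 / k! ≤ (p + 2) / (p + 1)² < 1`, so it is
`⌊p! · e⌋`.
-/

open Finset Nat Real

lemma sum_range_one_div_factorial_lt_exp_one (n : ℕ) :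
    ∑ i ∈ range n, (1 / i ! : ℝ) < exp 1 := by
  have h := sum_le_exp_of_nonneg zero_le_one (n + 1)
  simp only [one_pow, sum_range_succ] at h
  have : (0 : ℝ) < 1 / n ! := by positivity
  linarith

lemma factorial_mul_exp_one_sub_sum_lt_one {p : ℕ} (hp : 1 ≤ p) :
    (p ! : ℝ) * (exp 1 - ∑ i ∈ range (p + 1), (1 / i ! : ℝ)) < 1 := by
  have htail := Real.exp_bound' zero_le_one le_rfl p.succ_pos
  simp only [one_pow, one_mul] at htail
  have hp' : (1 : ℝ) ≤ p := mod_cast hp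
  calc (p ! : ℝ) * (exp 1 - ∑ i ∈ range (p + 1), (1 / i ! : ℝ))
      ≤ p ! * ((((p + 1 : ℕ) : ℝ) + 1) / ((p + 1)! * (p + 1 : ℕ))) := by gcongr; linarith
    _ = (p + 2) / ((p + 1) * (p + 1)) := by
        rw [factorial_succ]; push_cast; field_simp; ring
    _ < 1 := by rw [div_lt_one (by positivity)]; nlinarith

lemma cast_sum_factorial_div_factorial {K : Type*} [Field K] [CharZero K] (p : ℕ) :
    ((∑ i ∈ range (p + 1), p ! / i ! : ℕ) : K) = p ! * ∑ i ∈ range (p + 1), (1 / i ! : K) := by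
  rw [cast_sum, mul_sum]
  refine sum_congr rfl fun i hi => ?_
  rw [Nat.cast_div (factorial_dvd_factorial (mem_range_succ_iff.mp hi))
    (cast_ne_zero.mpr (factorial_ne_zero i))]
  ring

theorem floor_factorial_mul_exp_one {p : ℕ} (hp : 1 ≤ p) :
    ⌊(p ! : ℝ) * exp 1⌋₊ = ∑ i ∈ range (p + 1), p ! / i ! := by
  have hlt := sum_range_one_div_factorial_lt_exp_one (p + 1)
  have htail := factorial_mul_exp_one_sub_sum_lt_one hp
  have hfact : (0 : ℝ) < p ! := by positivity
  rw [floor_eq_iff (by positivity), cast_sum_factorial_div_factorial]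
  constructor
  · gcongr
  · linarith

lemma sum_Icc_factorial_div_factorial_sub (p : ℕ) :
    ∑ j ∈ Icc 1 p, p ! / (p - j)! = ∑ k ∈ range p, p ! / k ! := by
  have h := sum_Ico_reflect (fun k => p ! / k !) 1 (le_refl (p + 1))
  rwa [Ico_add_one_right_eq_Icc, Nat.sub_self, Nat.add_sub_cancel, ← range_eq_Ico] at h

theorem count_nonempty_injective_sequences (p : ℕ) (hp : 1 ≤ p) :
    (∑ j ∈ Finset.Icc 1 p, Fintype.card (Fin j ↪ Fin p)) =
      ∑ j ∈ Finset.Icc 1 p, p.factorial / (p - j).factorial ∧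
    (∑ j ∈ Finset.Icc 1 p, p.factorial / (p - j).factorial) =
      ⌊(p.factorial : ℝ) * Real.exp 1⌋₊ - 1 := by
  refine ⟨sum_congr rfl fun j hj => ?_, ?_⟩
  · rw [Fintype.card_embedding_eq, Fintype.card_fin, Fintype.card_fin,
      descFactorial_eq_div (mem_Icc.mp hj).2]
  · rw [floor_factorial_mul_exp_one hp, sum_range_succ, Nat.div_self p.factorial_pos,
      Nat.add_sub_cancel, sum_Icc_factorial_div_factorial_sub]
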